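/- Let Z be a set of six points of P^1 x P^1 in multiplicity 1 generic position and let I = I(Z). Then I^2 ≠ I^(2); indeed α(I^(2)) ≤ 7 while α(I^2) = 8, so I^(2) is not contained in I^2. -/

import Mathlib

open MvPolynomial

noncomputable section

/-- The weights giving the bigrading on `k[x0,x1,y0,y1]` with
`deg x0 = deg x1 = (1,0)` and `deg y0 = deg y1 = (0,1)`. -/
def w4 : Fin 4 → ℕ × ℕ := ![(1,0), (1,0), (0,1), (0,1)]

variable (k : Type*) [Field k]

/-- `p = ((a0,a1),(b0,b1))` represents a point `[a0:a1] × [b0:b1]` of `P^1 × P^1`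
if neither pair of coordinates is identically zero. -/
def IsPtRep (p : (k × k) × (k × k)) : Prop := p.1 ≠ 0 ∧ p.2 ≠ 0

/-- Two (nonzero) vectors of `k²` define the same point of `P^1`. -/
def ProjEq (u v : k × k) : Prop := u.1 * v.2 = u.2 * v.1

/-- Two representatives define the same point of `P^1 × P^1`. -/
def PtEq (p q : (k × k) × (k × k)) : Prop := ProjEq k p.1 q.1 ∧ ProjEq k p.2 q.2

/-- The bihomogeneous ideal of the point `[a0:a1] × [b0:b1]`, namely
`(a1*x0 - a0*x1, b1*y0 - b0*y1)`. -/
def pointIdeal (p : (k × k) × (k × k)) : Ideal (MvPolynomial (Fin 4) k) :=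
  Ideal.span {C p.1.2 * X 0 - C p.1.1 * X 1, C p.2.2 * X 2 - C p.2.1 * X 3}

/-- The ideal `I(Z) = ∩ I(P_i)` of a finite tuple of points. -/
def idealOfPoints {s : ℕ} (Z : Fin s → (k × k) × (k × k)) :
    Ideal (MvPolynomial (Fin 4) k) :=
  ⨅ i, pointIdeal k (Z i)

/-- The `m`-th symbolic power `I(Z)^(m) = ∩ I(P_i)^m`. -/
def symbolicPower {s : ℕ} (Z : Fin s → (k × k) × (k × k)) (m : ℕ) :
    Ideal (MvPolynomial (Fin 4) k) :=
  ⨅ i, (pointIdeal k (Z i)) ^ m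

/-- The bigraded piece `J_(i,j)` of a bihomogeneous ideal, as a `k`-subspace. -/
def bipiece (J : Ideal (MvPolynomial (Fin 4) k)) (d : ℕ × ℕ) :
    Submodule k (MvPolynomial (Fin 4) k) :=
  (Submodule.restrictScalars k J) ⊓ (weightedHomogeneousSubmodule k w4 d)

/-- `α(J)`: the least total degree `t = i + j` in which `J` has a nonzero
bihomogeneous element of bidegree `(i,j)`. -/
def alpha (J : Ideal (MvPolynomial (Fin 4) k)) : ℕ :=
  sInf {t | ∃ F ∈ J, F ≠ 0 ∧ ∃ d : ℕ × ℕ, d.1 + d.2 = t ∧ F.IsWeightedHomogeneous w4 d}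

/-- The coordinates of a tuple of points of `P^1 × P^1`, as a point of affine `4s`-space. -/
def coordsOf {s : ℕ} (Z : Fin s → (k × k) × (k × k)) : Fin s × Fin 4 → k :=
  fun p => ![(Z p.1).1.1, (Z p.1).1.2, (Z p.1).2.1, (Z p.1).2.2] p.2

/-- The weights making `k[(P^1 × P^1)^s]` multigraded. -/
def wProd (s : ℕ) : Fin s × Fin 4 → (Fin s → ℕ × ℕ) := fun p => Pi.single p.1 (w4 p.2)

/-- `GeneralPosition k s P` says that property `P` holds for `s` general points of
`P^1 × P^1`: there is a nonempty Zariski-open subset `U` of `(P^1 × P^1)^s` (the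
complement of the zero locus of a multihomogeneous form `G` not vanishing identically)
such that `P` holds for every tuple of pairwise distinct points lying in `U`. -/
def GeneralPosition (s : ℕ) (P : (Fin s → (k × k) × (k × k)) → Prop) : Prop :=
  ∃ (G : MvPolynomial (Fin s × Fin 4) k) (d : Fin s → ℕ × ℕ),
    G.IsWeightedHomogeneous (wProd s) d ∧
    (∃ Z : Fin s → (k × k) × (k × k), (∀ i, IsPtRep k (Z i)) ∧ eval (coordsOf k Z) G ≠ 0) ∧
    ∀ Z : Fin s → (k × k) × (k × k), (∀ i, IsPtRep k (Z i)) →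
      (∀ i j, i ≠ j → ¬ PtEq k (Z i) (Z j)) →
      eval (coordsOf k Z) G ≠ 0 → P Z

/-- Distinct points in multiplicity 1 generic position: every subset `S` imposes
independent conditions in every bidegree, i.e.
`dim_k I(S)_(i,j) = max {0, (i+1)(j+1) - |S|}`. -/
def Mult1Generic {s : ℕ} (Z : Fin s → (k × k) × (k × k)) : Prop :=
  (∀ i, IsPtRep k (Z i)) ∧ (∀ i j, i ≠ j → ¬ PtEq k (Z i) (Z j)) ∧
  ∀ (S : Finset (Fin s)) (i j : ℕ),
    Module.finrank k ↥(bipiece k (⨅ a ∈ S, pointIdeal k (Z a)) (i, j))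
      = (i + 1) * (j + 1) - S.card

/-!
Let `H` be the space of forms of bidegree `(3,4)`, of dimension at most `20`. If `l`, `m` are the
two linear equations of a point `P` and `l'`, `m'` complete them to coordinates, then the `17`
forms `l'^a l^(3-a) m'^b m^(4-b)` with `(3-a) + (4-b) ≥ 2` are independent and lie in `I(P)^2`.
So each `I(P_i)^2 ∩ H` has codimension at most `3` in `H`, and the six of them meet in a nonzero
form of `I^(2)` of degree `7`.

Generic position makes `I_(i,j) = 0` whenever `(i+1)(j+1) ≤ 6`, in particular for `i + j ≤ 3`.
As `I` is bihomogeneous, it lies in `(x0,x1,y0,y1)^4`, hence `I^2` lies in `(x0,x1,y0,y1)^8`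
and has no nonzero form of degree below `8`; the square of a nonzero form of `I_(2,2)`,
a space of dimension `9 - 6`, has degree `8`.
-/

section LinearSubstitution

variable {R σ : Type*} [CommRing R] [Fintype σ]

def linSubst (A : Matrix σ σ R) : MvPolynomial σ R →ₐ[R] MvPolynomial σ R :=
  aeval fun i => ∑ j, C (A i j) * X j

theorem linSubst_X (A : Matrix σ σ R) (i : σ) : linSubst A (X i) = ∑ j, C (A i j) * X j :=
  aeval_X _ _

theorem linSubst_C (A : Matrix σ σ R) (a : R) : linSubst A (C a) = C a :=
  aeval_C _ _

theorem linSubst_comp (A B : Matrix σ σ R) :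
    (linSubst B).comp (linSubst A) = linSubst (A * B) := by
  refine algHom_ext fun i => ?_
  simp only [AlgHom.comp_apply, linSubst_X, map_sum, map_mul, linSubst_C, Matrix.mul_apply,
    Finset.mul_sum, Finset.sum_mul, ← mul_assoc]
  exact Finset.sum_comm

theorem linSubst_one [DecidableEq σ] : linSubst (1 : Matrix σ σ R) = AlgHom.id R _ :=
  algHom_ext fun i => by simp [linSubst_X, Matrix.one_apply]

theorem linSubst_injective [DecidableEq σ] {A : Matrix σ σ R} (hA : IsUnit A.det) :
    Function.Injective (linSubst A) := by
  refine Function.LeftInverse.injective (g := linSubst A⁻¹) fun F => ?_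
  rw [← AlgHom.comp_apply, linSubst_comp, Matrix.mul_nonsing_inv _ hA, linSubst_one]
  rfl

theorem linSubst_monomial_one (A : Matrix σ σ R) (e : σ →₀ ℕ) :
    linSubst A (monomial e 1) = ∏ i, linSubst A (X i) ^ e i := by
  rw [linSubst, aeval_monomial, map_one, one_mul, Finsupp.prod_fintype _ _ (by simp)]
  simp only [aeval_X]

theorem isWeightedHomogeneous_linSubst {M : Type*} [AddCommMonoid M] {w : σ → M}
    {A : Matrix σ σ R} (hA : ∀ i j, A i j ≠ 0 → w j = w i) {F : MvPolynomial σ R} {m : M}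
    (hF : F.IsWeightedHomogeneous w m) : (linSubst A F).IsWeightedHomogeneous w m := by
  have hX : ∀ i, (linSubst A (X i)).IsWeightedHomogeneous w (w i) := fun i => by
    rw [linSubst_X]
    refine IsWeightedHomogeneous.sum _ _ _ fun j _ => ?_
    by_cases hij : A i j = 0
    · simp [hij, isWeightedHomogeneous_zero]
    · exact hA i j hij ▸ (isWeightedHomogeneous_X R w j).C_mul _
  induction hF using IsWeightedHomogeneous.induction_on with
  | zero => simpa using isWeightedHomogeneous_zero R w m
  | add p q _ _ hp hq => simpa using hp.add hq
  | monomial d r hr =>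
    rw [← hr, Finsupp.weight_apply, Finsupp.sum_fintype _ _ (by simp), ← mul_one r,
      ← smul_eq_mul, ← smul_monomial, map_smul, linSubst_monomial_one, smul_eq_C_mul]
    exact (IsWeightedHomogeneous.prod _ _ _ fun i _ => (hX i).pow (d i)).C_mul r

end LinearSubstitution

theorem isWeightedHomogeneous_C_mul_X_sub_C_mul_X {R σ M : Type*} [CommRing R]
    [AddCommMonoid M] (w : σ → M) (a b : R) {i j : σ} (h : w j = w i) :
    (C a * X i - C b * X j : MvPolynomial σ R).IsWeightedHomogeneous w (w i) :=
  ((isWeightedHomogeneous_X R w i).C_mul a).sub (h ▸ (isWeightedHomogeneous_X R w j).C_mul b)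

theorem pow_mul_pow_mem_pow_of_le {R : Type*} [CommSemiring R] {I : Ideal R} {x y : R}
    (hx : x ∈ I) (hy : y ∈ I) {m n N : ℕ} (h : N ≤ m + n) : x ^ m * y ^ n ∈ I ^ N :=
  Ideal.pow_le_pow_right h
    (pow_add I m n ▸ Ideal.mul_mem_mul (Ideal.pow_mem_pow hx m) (Ideal.pow_mem_pow hy n))

open Module Finset in
theorem finrank_add_sum_finrank_le_finrank_iInf {K V ι : Type*} [Field K] [AddCommGroup V]
    [Module K V] (H : Submodule K V) [FiniteDimensional K H] (U : ι → Submodule K V)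
    (s : Finset ι) (hU : ∀ i ∈ s, U i ≤ H) :
    finrank K H + ∑ i ∈ s, finrank K (U i)
      ≤ finrank K ↥(H ⊓ ⨅ i ∈ s, U i) + #s * finrank K H := by
  classical
  induction s using Finset.induction_on with
  | empty => rw [show H ⊓ ⨅ i ∈ (∅ : Finset ι), U i = H by simp]; simp
  | insert a s ha ih =>
    set W := H ⊓ ⨅ i ∈ s, U i
    have hUa : U a ≤ H := hU a (mem_insert_self a s)
    have : FiniteDimensional K W := Submodule.finiteDimensional_of_le inf_le_left
    have : FiniteDimensional K (U a) := Submodule.finiteDimensional_of_le hUa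
    have hsup := Submodule.finrank_mono (sup_le (inf_le_left : W ≤ H) hUa)
    have hmod := Submodule.finrank_sup_add_finrank_inf_eq W (U a)
    have ih := ih fun i hi => hU i (mem_insert_of_mem hi)
    rw [sum_insert ha, card_insert_of_notMem ha, Finset.iInf_insert, inf_left_comm,
      inf_comm (U a)]
    nlinarith

section BihomogeneousForms

variable {k}

open Module

def monoExp (a b c d : ℕ) : Fin 4 →₀ ℕ := Finsupp.equivFunOnFinite.symm ![a, b, c, d]

@[simp]
theorem coe_monoExp (a b c d : ℕ) : ⇑(monoExp a b c d) = ![a, b, c, d] := rfl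

theorem weight_w4 (e : Fin 4 →₀ ℕ) : Finsupp.weight w4 e = (e 0 + e 1, e 2 + e 3) := by
  simp [Finsupp.weight_apply, Finsupp.sum_fintype, Fin.sum_univ_four, w4, Prod.ext_iff]

theorem degree_eq_weight_w4 (e : Fin 4 →₀ ℕ) :
    e.degree = (Finsupp.weight w4 e).1 + (Finsupp.weight w4 e).2 := by
  rw [weight_w4, Finsupp.degree_eq_sum, Fin.sum_univ_four]
  ring

def bidegreeCoeffs (d : ℕ × ℕ) :
    weightedHomogeneousSubmodule k w4 d →ₗ[k] (Fin (d.1 + 1) × Fin (d.2 + 1) → k) :=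
  (LinearMap.pi fun ab : Fin (d.1 + 1) × Fin (d.2 + 1) =>
    lcoeff k (monoExp ab.1 (d.1 - ab.1) ab.2 (d.2 - ab.2))).comp (Submodule.subtype _)

theorem bidegreeCoeffs_injective (d : ℕ × ℕ) :
    Function.Injective (bidegreeCoeffs (k := k) d) := by
  rw [← LinearMap.ker_eq_bot, LinearMap.ker_eq_bot']
  rintro ⟨f, hf⟩ hf0
  refine Subtype.ext (MvPolynomial.ext _ _ fun e => ?_)
  by_contra hne
  have hw : e 0 + e 1 = d.1 ∧ e 2 + e 3 = d.2 := by
    simpa [weight_w4, Prod.ext_iff] using hf hne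
  have he : monoExp (e 0) (d.1 - e 0) (e 2) (d.2 - e 2) = e := by
    ext l; fin_cases l <;> simp <;> omega
  have h := congrFun hf0 (⟨e 0, by omega⟩, ⟨e 2, by omega⟩)
  simp [bidegreeCoeffs, he] at h
  exact hne h

instance (d : ℕ × ℕ) : FiniteDimensional k (weightedHomogeneousSubmodule k w4 d) :=
  Module.Finite.of_injective _ (bidegreeCoeffs_injective d)

instance (J : Ideal (MvPolynomial (Fin 4) k)) (d : ℕ × ℕ) :
    FiniteDimensional k (bipiece k J d) :=
  Submodule.finiteDimensional_of_le inf_le_right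

theorem finrank_weightedHomogeneousSubmodule_w4_le (d : ℕ × ℕ) :
    finrank k (weightedHomogeneousSubmodule k w4 d) ≤ (d.1 + 1) * (d.2 + 1) := by
  simpa using LinearMap.finrank_le_finrank_of_injective (bidegreeCoeffs_injective (k := k) d)

attribute [local instance] MvPolynomial.weightedGradedAlgebra

theorem pointIdeal_isHomogeneous (p : (k × k) × (k × k)) :
    (pointIdeal k p).IsHomogeneous (weightedHomogeneousSubmodule k w4) := by
  refine Ideal.homogeneous_span _ _ ?_
  rintro x (rfl | rfl)
  exacts [⟨_, isWeightedHomogeneous_C_mul_X_sub_C_mul_X w4 _ _ rfl⟩,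
    ⟨_, isWeightedHomogeneous_C_mul_X_sub_C_mul_X w4 _ _ rfl⟩]

theorem idealOfPoints_isHomogeneous {s : ℕ} (Z : Fin s → (k × k) × (k × k)) :
    (idealOfPoints k Z).IsHomogeneous (weightedHomogeneousSubmodule k w4) :=
  Ideal.IsHomogeneous.iInf fun i => pointIdeal_isHomogeneous (Z i)

theorem le_pow_idealOfVars_of_bipiece_eq_bot {I : Ideal (MvPolynomial (Fin 4) k)}
    (hI : I.IsHomogeneous (weightedHomogeneousSubmodule k w4)) {n : ℕ}
    (h : ∀ d : ℕ × ℕ, d.1 + d.2 < n → bipiece k I d = ⊥) :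
    I ≤ idealOfVars (Fin 4) k ^ n := by
  classical
  intro f hf
  rw [mem_pow_idealOfVars_iff']
  intro e he
  have hmem : weightedHomogeneousComponent w4 (Finsupp.weight w4 e) f
      ∈ bipiece k I (Finsupp.weight w4 e) :=
    ⟨weightedHomogeneousComponent_mem_of_mem k w4 hI hf _,
      weightedHomogeneousComponent_mem w4 f _⟩
  rw [h _ (degree_eq_weight_w4 e ▸ he), Submodule.mem_bot] at hmem
  simpa [coeff_weightedHomogeneousComponent] using congrArg (coeff e) hmem

theorem eq_zero_of_mem_pow_idealOfVars {F : MvPolynomial (Fin 4) k} {n : ℕ} {d : ℕ × ℕ}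
    (hF : F ∈ idealOfVars (Fin 4) k ^ n) (hd : F.IsWeightedHomogeneous w4 d)
    (hlt : d.1 + d.2 < n) : F = 0 := by
  rw [mem_pow_idealOfVars_iff'] at hF
  refine MvPolynomial.ext _ _ fun e => ?_
  by_contra hne
  exact hne (hF e (by rwa [degree_eq_weight_w4, hd hne]))

theorem alpha_le {J : Ideal (MvPolynomial (Fin 4) k)} {F : MvPolynomial (Fin 4) k}
    {d : ℕ × ℕ} (hF : F ∈ J) (hF0 : F ≠ 0) (hd : F.IsWeightedHomogeneous w4 d) :
    alpha k J ≤ d.1 + d.2 :=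
  Nat.sInf_le ⟨F, hF, hF0, d, rfl, hd⟩

theorem alpha_eq_of_le_pow_idealOfVars {J : Ideal (MvPolynomial (Fin 4) k)} {n : ℕ}
    (hJ : J ≤ idealOfVars (Fin 4) k ^ n) {F : MvPolynomial (Fin 4) k} {d : ℕ × ℕ}
    (hF : F ∈ J) (hF0 : F ≠ 0) (hd : F.IsWeightedHomogeneous w4 d) (hdn : d.1 + d.2 = n) :
    alpha k J = n := by
  refine le_antisymm (hdn ▸ alpha_le hF hF0 hd) (le_csInf ⟨_, F, hF, hF0, d, hdn, hd⟩ ?_)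
  rintro t ⟨G, hG, hG0, e, rfl, hGe⟩
  by_contra hlt
  exact hG0 (eq_zero_of_mem_pow_idealOfVars (hJ hG) hGe (by omega))

end BihomogeneousForms

section SquareOfPointIdeal

variable {k}

open Module

theorem exists_mul_add_mul_ne_zero {a : k × k} (ha : a ≠ 0) :
    ∃ c : k × k, c.1 * a.1 + c.2 * a.2 ≠ 0 := by
  by_cases h1 : a.1 = 0
  · exact ⟨(0, 1), by simpa [h1, Prod.ext_iff] using ha⟩
  · exact ⟨(1, 0), by simpa using h1⟩

/-- The rows are the coefficients of `l', l, m', m`: `c` and `e` complete the equations of `p`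
to bases of the linear forms in `x` and in `y`. -/
def frameMatrix (p : (k × k) × (k × k)) (c e : k × k) : Matrix (Fin 4) (Fin 4) k :=
  !![c.1, c.2, 0, 0; p.1.2, -p.1.1, 0, 0; 0, 0, e.1, e.2; 0, 0, p.2.2, -p.2.1]

section

variable (p : (k × k) × (k × k)) (c e : k × k)

theorem det_frameMatrix :
    (frameMatrix p c e).det = (c.1 * p.1.1 + c.2 * p.1.2) * (e.1 * p.2.1 + e.2 * p.2.2) := by
  simp [frameMatrix, Matrix.det_succ_row_zero, Fin.sum_univ_succ, Fin.succAbove_of_le_castSucc]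
  ring

theorem w4_eq_of_frameMatrix_ne_zero (i j : Fin 4) (h : frameMatrix p c e i j ≠ 0) :
    w4 j = w4 i := by
  fin_cases i <;> fin_cases j <;> simp_all [frameMatrix, w4]

theorem linSubst_frameMatrix_X_one :
    linSubst (frameMatrix p c e) (X 1) = C p.1.2 * X 0 - C p.1.1 * X 1 := by
  simp [linSubst_X, Fin.sum_univ_four, frameMatrix, sub_eq_add_neg]

theorem linSubst_frameMatrix_X_three :
    linSubst (frameMatrix p c e) (X 3) = C p.2.2 * X 2 - C p.2.1 * X 3 := by
  simp [linSubst_X, Fin.sum_univ_four, frameMatrix, sub_eq_add_neg]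

end

theorem linSubst_frameMatrix_monomial_mem_bipiece (p : (k × k) × (k × k)) (c e : k × k)
    {a b : ℕ} (ha : a ≤ 3) (hb : b ≤ 4) (hab : a + b ≤ 5) :
    linSubst (frameMatrix p c e) (monomial (monoExp a (3 - a) b (4 - b)) 1)
      ∈ bipiece k (pointIdeal k p ^ 2) (3, 4) := by
  refine ⟨?_, isWeightedHomogeneous_linSubst (w4_eq_of_frameMatrix_ne_zero p c e)
    (isWeightedHomogeneous_monomial w4 _ 1 (by simp [weight_w4]; omega))⟩
  have h1 : linSubst (frameMatrix p c e) (X 1) ∈ pointIdeal k p :=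
    linSubst_frameMatrix_X_one p c e ▸ Ideal.subset_span (Set.mem_insert _ _)
  have h3 : linSubst (frameMatrix p c e) (X 3) ∈ pointIdeal k p :=
    linSubst_frameMatrix_X_three p c e ▸ Ideal.subset_span (Set.mem_insert_of_mem _ rfl)
  show _ ∈ pointIdeal k p ^ 2
  rw [linSubst_monomial_one, Fin.prod_univ_four]
  simp only [coe_monoExp, Matrix.cons_val]
  convert Ideal.mul_mem_left _
    (linSubst (frameMatrix p c e) (X 0) ^ a * linSubst (frameMatrix p c e) (X 2) ^ b)
    (pow_mul_pow_mem_pow_of_le h1 h3 (m := 3 - a) (n := 4 - b) (N := 2) (by omega)) using 1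
  ring

theorem seventeen_le_finrank_bipiece_pointIdeal_sq {p : (k × k) × (k × k)}
    (hp : IsPtRep k p) : 17 ≤ finrank k (bipiece k (pointIdeal k p ^ 2) (3, 4)) := by
  obtain ⟨c, hc⟩ := exists_mul_add_mul_ne_zero hp.1
  obtain ⟨e, he⟩ := exists_mul_add_mul_ne_zero hp.2
  set A := frameMatrix p c e
  let T : Finset (ℕ × ℕ) :=
    (Finset.range 4 ×ˢ Finset.range 5).filter fun ab => ab.1 + ab.2 ≤ 5
  let exps : T → Fin 4 →₀ ℕ := fun ab => monoExp ab.1.1 (3 - ab.1.1) ab.1.2 (4 - ab.1.2)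
  have hexps : Function.Injective exps := fun ab ab' h =>
    Subtype.ext (Prod.ext (congr($h 0)) (congr($h 2)))
  have hv : LinearIndependent k fun ab => linSubst A (monomial (exps ab) 1) := by
    have hA : IsUnit A.det := by
      rw [det_frameMatrix]
      exact (mul_ne_zero hc he).isUnit
    have := ((basisMonomials (Fin 4) k).linearIndependent.comp _ hexps).map'
      (linSubst A).toLinearMap (LinearMap.ker_eq_bot.mpr (linSubst_injective hA))
    rw [coe_basisMonomials] at this
    exact this
  have hmem : ∀ ab,
      linSubst A (monomial (exps ab) 1) ∈ bipiece k (pointIdeal k p ^ 2) (3, 4) := by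
    rintro ⟨⟨a, b⟩, hab⟩
    simp only [T, Finset.mem_filter, Finset.mem_product, Finset.mem_range] at hab
    exact linSubst_frameMatrix_monomial_mem_bipiece (a := a) (b := b) p c e (by omega) (by omega)
      hab.2
  have hv' : LinearIndependent k fun ab : T =>
      (⟨_, hmem ab⟩ : bipiece k (pointIdeal k p ^ 2) (3, 4)) :=
    LinearIndependent.of_comp (Submodule.subtype _) hv
  have hT : T.card = 17 := by decide
  calc 17 = Fintype.card T := by rw [Fintype.card_coe, hT]
    _ ≤ _ := hv'.fintype_card_le_finrank

end SquareOfPointIdeal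
section SixPoints

variable {k}

open Module

theorem exists_mem_symbolicPower_two_bidegree_three_four {Z : Fin 6 → (k × k) × (k × k)}
    (hZ : ∀ i, IsPtRep k (Z i)) :
    ∃ F ∈ symbolicPower k Z 2, F ≠ 0 ∧ F.IsWeightedHomogeneous w4 (3, 4) := by
  set H := weightedHomogeneousSubmodule k w4 (3, 4)
  set U := fun i => bipiece k (pointIdeal k (Z i) ^ 2) (3, 4)
  have hcount :=
    finrank_add_sum_finrank_le_finrank_iInf H U Finset.univ fun i _ => inf_le_right
  have hH : finrank k H ≤ 20 := finrank_weightedHomogeneousSubmodule_w4_le (3, 4)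
  have hU : 6 * 17 ≤ ∑ i, finrank k (U i) := by
    simpa using Finset.card_nsmul_le_sum Finset.univ (fun i => finrank k (U i)) 17
      fun i _ => seventeen_le_finrank_bipiece_pointIdeal_sq (hZ i)
  obtain ⟨F, hFW, hF0⟩ := Submodule.exists_mem_ne_zero_of_ne_bot
    (p := H ⊓ ⨅ i ∈ Finset.univ, U i) fun h => by
      rw [h, finrank_bot, Finset.card_univ, Fintype.card_fin] at hcount
      omega
  have hFU : ∀ i, F ∈ U i := by
    simpa using (Submodule.mem_inf.mp hFW).2
  exact ⟨F, Ideal.mem_iInf.mpr fun i => (hFU i).1, hF0, (Submodule.mem_inf.mp hFW).1⟩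

theorem Mult1Generic.finrank_bipiece_idealOfPoints {s : ℕ} {Z : Fin s → (k × k) × (k × k)}
    (hZ : Mult1Generic k Z) (i j : ℕ) :
    finrank k (bipiece k (idealOfPoints k Z) (i, j)) = (i + 1) * (j + 1) - s := by
  have h := hZ.2.2 Finset.univ i j
  rwa [show ⨅ a ∈ Finset.univ, pointIdeal k (Z a) = idealOfPoints k Z by simp [idealOfPoints],
    Finset.card_univ, Fintype.card_fin] at h

theorem Mult1Generic.idealOfPoints_le_pow_idealOfVars {s : ℕ} {Z : Fin s → (k × k) × (k × k)}
    (hZ : Mult1Generic k Z) (hs : 6 ≤ s) : idealOfPoints k Z ≤ idealOfVars (Fin 4) k ^ 4 := by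
  refine le_pow_idealOfVars_of_bipiece_eq_bot (idealOfPoints_isHomogeneous Z)
    fun ⟨i, j⟩ hij => ?_
  have hsmall : (i + 1) * (j + 1) ≤ 6 := by
    have hi : i < 4 := by dsimp only at hij; omega
    have hj : j < 4 := by dsimp only at hij; omega
    interval_cases i <;> interval_cases j <;> omega
  rw [← Submodule.finrank_eq_zero, hZ.finrank_bipiece_idealOfPoints]
  omega

theorem Mult1Generic.exists_mem_idealOfPoints_bidegree_two_two {s : ℕ}
    {Z : Fin s → (k × k) × (k × k)} (hZ : Mult1Generic k Z) (hs : s < 9) :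
    ∃ F ∈ idealOfPoints k Z, F ≠ 0 ∧ F.IsWeightedHomogeneous w4 (2, 2) := by
  obtain ⟨F, hF, hF0⟩ := Submodule.exists_mem_ne_zero_of_ne_bot
    (p := bipiece k (idealOfPoints k Z) (2, 2)) fun h => by
      have := hZ.finrank_bipiece_idealOfPoints 2 2
      rw [h, finrank_bot] at this
      omega
  exact ⟨F, hF.1, hF0, hF.2⟩

end SixPoints

theorem six_points_second_symbolic_ne_square_general {k : Type*} [Field k]
    (Z : Fin 6 → (k × k) × (k × k)) (hZ : Mult1Generic k Z) :
    idealOfPoints k Z ^ 2 ≠ symbolicPower k Z 2 ∧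
    alpha k (symbolicPower k Z 2) ≤ 7 ∧
    alpha k (idealOfPoints k Z ^ 2) = 8 ∧
    ¬ symbolicPower k Z 2 ≤ idealOfPoints k Z ^ 2 := by
  have hsq : idealOfPoints k Z ^ 2 ≤ idealOfVars (Fin 4) k ^ 8 := by
    simpa only [← pow_mul] using
      Ideal.pow_right_mono (hZ.idealOfPoints_le_pow_idealOfVars le_rfl) 2
  obtain ⟨F, hFI, hF0, hFd⟩ := hZ.exists_mem_idealOfPoints_bidegree_two_two (by norm_num)
  obtain ⟨G, hGI, hG0, hGd⟩ := exists_mem_symbolicPower_two_bidegree_three_four hZ.1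
  have hnot : ¬ symbolicPower k Z 2 ≤ idealOfPoints k Z ^ 2 := fun h =>
    hG0 (eq_zero_of_mem_pow_idealOfVars (hsq (h hGI)) hGd (by norm_num))
  refine ⟨fun h => hnot h.ge, alpha_le hGI hG0 hGd, ?_, hnot⟩
  exact alpha_eq_of_le_pow_idealOfVars hsq (Ideal.pow_mem_pow hFI 2) (pow_ne_zero 2 hF0)
    (hFd.pow 2) rfl

/-- For six points of `P^1 × P^1` in multiplicity 1 generic position,
`I^2 ≠ I^(2)`; indeed `α(I^(2)) ≤ 7` while `α(I^2) = 8`, so `I^(2) ⊄ I^2`. -/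
theorem six_points_second_symbolic_ne_square {k : Type*} [Field k] [IsAlgClosed k]
    (Z : Fin 6 → (k × k) × (k × k)) (hZ : Mult1Generic k Z) :
    idealOfPoints k Z ^ 2 ≠ symbolicPower k Z 2 ∧
    alpha k (symbolicPower k Z 2) ≤ 7 ∧
    alpha k (idealOfPoints k Z ^ 2) = 8 ∧
    ¬ symbolicPower k Z 2 ≤ idealOfPoints k Z ^ 2 :=
  six_points_second_symbolic_ne_square_general Z hZ
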